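/- arXiv:0706.1849 — 2 statements merged into one kernel-verified Lean document; each statement's English description precedes it below -/
import Mathlib

section
/- For t = (x,y) ∈ ℍ₊ and s = (s_x, s_y) ∈ ℝ² with t + s ∈ ℍ₊, let r(t, t+s) = Cov(X(x,y), X(x+s_x, y+s_y)). Then for every t = (x,y) ∈ ℍ₊ with x > 0, lim_{s→0, s≠0} (1 − r(t, t+s))/((|s_x| + |s_x + s_y|)/(2y)) = 1. In other words, the field of standardized Brownian motion increments is locally stationary with index α = 1 and local structure C_{(x,y)}(s_x, s_y) = (|s_x| + |s_x + s_y|)/(2y). -/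
open MeasureTheory ProbabilityTheory Filter Real Topology

open scoped ENNReal NNReal

section Aux
variable {Ω : Type*}


lemma int_sq_exp {b : ℝ} (hb : 0 < b) :
    ∫ x : ℝ, x ^ 2 * rexp (-b * x ^ 2) = b ^ (-(3:ℝ)/2) * Real.Gamma (3/2) := by
  have h := integral_rpow_mul_exp_neg_mul_rpow (p := 2) (q := 2) (by norm_num) (by norm_num) hb
  have h2 : ∀ x : ℝ, x ^ (2:ℝ) = x ^ 2 := fun x => by
    rw [show (2:ℝ) = ((2:ℕ):ℝ) by norm_num, Real.rpow_natCast]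
  simp only [h2] at h
  have habs : ∫ x : ℝ, x ^ 2 * rexp (-b * x ^ 2)
      = ∫ x : ℝ, (fun t => t ^ 2 * rexp (-b * t ^ 2)) |x| := by
    congr 1; ext x; simp [sq_abs]
  have hca := integral_comp_abs (f := fun t => t ^ 2 * rexp (-b * t ^ 2))
  rw [habs, hca, h]
  rw [show (-(2+1)/2 : ℝ) = -(3:ℝ)/2 by norm_num, show ((2+1)/2 : ℝ) = 3/2 by norm_num]
  ring

lemma integrable_sq_exp {b : ℝ} (hb : 0 < b) :
    Integrable (fun x : ℝ => x ^ 2 * rexp (-b * x ^ 2)) := by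
  have h := integrable_rpow_mul_exp_neg_mul_sq hb (s := 2) (by norm_num)
  have h2 : ∀ x : ℝ, x ^ (2:ℝ) = x ^ 2 := fun x => by
    rw [show (2:ℝ) = ((2:ℕ):ℝ) by norm_num, Real.rpow_natCast]
  simpa only [h2] using h

lemma gauss_density (v : ℝ≥0) (hv : v ≠ 0) :
    gaussianReal 0 v = volume.withDensity
      (fun x => ((gaussianPDFReal 0 v x).toNNReal : ℝ≥0∞)) := by
  rw [gaussianReal_of_var_ne_zero _ hv]
  rfl

lemma gauss_int_eq (v : ℝ≥0) (hv : v ≠ 0) (g : ℝ → ℝ) :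
    ∫ x, g x ∂(gaussianReal 0 v) = ∫ x, gaussianPDFReal 0 v x * g x := by
  rw [gauss_density v hv, integral_withDensity_eq_integral_smul
    ((measurable_gaussianPDFReal 0 v).real_toNNReal) g]
  congr 1; ext x
  rw [NNReal.smul_def, Real.coe_toNNReal _ (gaussianPDFReal_nonneg 0 v x), smul_eq_mul]

lemma gauss_integrable_iff (v : ℝ≥0) (hv : v ≠ 0) (g : ℝ → ℝ) :
    Integrable g (gaussianReal 0 v) ↔ Integrable (fun x => gaussianPDFReal 0 v x * g x) := by
  rw [gauss_density v hv, integrable_withDensity_iff_integrable_smul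
    ((measurable_gaussianPDFReal 0 v).real_toNNReal)]
  constructor <;> intro h <;> refine h.congr (Filter.Eventually.of_forall fun x => ?_) <;>
    simp only [NNReal.smul_def, Real.coe_toNNReal _ (gaussianPDFReal_nonneg 0 v x), smul_eq_mul]

lemma gauss_pdf_sq (v : ℝ≥0) (hv : v ≠ 0) (x : ℝ) :
    gaussianPDFReal 0 v x * x ^ 2
      = (√(2 * π * v))⁻¹ * (x ^ 2 * rexp (-(2 * (v:ℝ))⁻¹ * x ^ 2)) := by
  rw [gaussianPDFReal]
  rw [show ∀ y : ℝ, -(y - 0) ^ 2 / (2 * (v:ℝ)) = -(2 * (v:ℝ))⁻¹ * y ^ 2 from fun y => by ring]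
  ring

lemma gauss_sq_moment (v : ℝ≥0) : ∫ x, x ^ 2 ∂(gaussianReal 0 v) = v := by
  by_cases hv : v = 0
  · subst hv; simp
  · have hv' : (0:ℝ) < v := lt_of_le_of_ne v.coe_nonneg (by exact_mod_cast (Ne.symm hv))
    have hb : (0:ℝ) < (2 * (v:ℝ))⁻¹ := by positivity
    rw [gauss_int_eq v hv]
    simp only [gauss_pdf_sq v hv]
    rw [integral_const_mul, int_sq_exp hb]
    have h32 : Real.Gamma (3/2) = √π / 2 := by
      rw [show (3/2 : ℝ) = 1/2 + 1 by norm_num, Real.Gamma_add_one (by norm_num),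
        Real.Gamma_one_half_eq]
      ring
    have hA : (0:ℝ) < 2 * (v:ℝ) := by positivity
    have hrp : ((2 * (v:ℝ))⁻¹) ^ (-(3:ℝ)/2) = (2 * (v:ℝ)) ^ ((3:ℝ)/2) := by
      rw [Real.inv_rpow hA.le, ← Real.rpow_neg hA.le]
      norm_num
    rw [hrp, h32]
    have hsA : √(2 * (v:ℝ)) * √(2 * (v:ℝ)) = 2 * (v:ℝ) := Real.mul_self_sqrt hA.le
    have h2 : (2 * (v:ℝ)) ^ ((3:ℝ)/2) = (2 * (v:ℝ)) * √(2 * (v:ℝ)) := by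
      rw [show ((3:ℝ)/2) = 1 + 1/2 by norm_num, Real.rpow_add hA, Real.rpow_one,
        ← Real.sqrt_eq_rpow]
    have hsplit : √(2 * π * (v:ℝ)) = √π * √(2 * (v:ℝ)) := by
      rw [← Real.sqrt_mul Real.pi_pos.le]
      ring_nf
    rw [h2, hsplit]
    have hπ : (0:ℝ) < √π := Real.sqrt_pos.mpr Real.pi_pos
    have hsA' : (0:ℝ) < √(2 * (v:ℝ)) := Real.sqrt_pos.mpr hA
    field_simp

lemma gauss_sq_integrable (v : ℝ≥0) : Integrable (fun x : ℝ => x ^ 2) (gaussianReal 0 v) := by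
  by_cases hv : v = 0
  · subst hv
    simp only [gaussianReal_zero_var]
    refine ⟨(measurable_id.pow_const 2).aestronglyMeasurable, ?_⟩
    rw [HasFiniteIntegral, lintegral_dirac' _ (by measurability)]
    exact ENNReal.coe_lt_top
  · rw [gauss_integrable_iff v hv]
    have hv' : (0:ℝ) < v := lt_of_le_of_ne v.coe_nonneg (by exact_mod_cast (Ne.symm hv))
    have hb : (0:ℝ) < (2 * (v:ℝ))⁻¹ := by positivity
    refine ((integrable_sq_exp hb).const_mul ((√(2 * π * v))⁻¹)).congr
      (Filter.Eventually.of_forall fun x => (gauss_pdf_sq v hv x).symm)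

lemma moment_of_map {Ω : Type*} [MeasureSpace Ω] [IsProbabilityMeasure (ℙ : Measure Ω)]
    {f : Ω → ℝ} {v : ℝ≥0} (h : Measure.map f ℙ = gaussianReal 0 v) :
    Integrable (fun ω => (f ω) ^ 2) ℙ ∧ ∫ ω, (f ω) ^ 2 ∂ℙ = v := by
  have hf : AEMeasurable f ℙ := aemeasurable_of_map_neZero (by rw [h]; infer_instance)
  have hg : AEStronglyMeasurable (fun x : ℝ => x ^ 2) (Measure.map f ℙ) :=
    (measurable_id.pow_const 2).aestronglyMeasurable
  constructor
  · have := (integrable_map_measure hg hf).mp (by rw [h]; exact gauss_sq_integrable v)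
    exact this
  · rw [← integral_map hf hg, h, gauss_sq_moment]

end Aux

/-- A process `B : Ω → ℝ → ℝ` is a standard Brownian motion (on `[0,∞)`): it has
continuous paths, starts at `0`, and is a centered Gaussian process with covariance
`Cov (B s, B t) = min s t`; the latter is expressed by requiring every finite linear
combination `∑ i, c i * B (t i)` (with nonnegative times) to be a centered Gaussian
variable with the corresponding variance. -/
def IsStandardBrownianMotion {Ω : Type*} [MeasureSpace Ω] (B : Ω → ℝ → ℝ) : Prop :=
  IsProbabilityMeasure (ℙ : Measure Ω) ∧
  (∀ ω, Continuous (B ω)) ∧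
  (∀ ω, B ω 0 = 0) ∧
  ∀ (n : ℕ) (t c : Fin n → ℝ), (∀ i, 0 ≤ t i) →
    Measure.map (fun ω => ∑ i, c i * B ω (t i)) ℙ =
      gaussianReal 0 (Real.toNNReal (∑ i, ∑ j, c i * c j * min (t i) (t j)))


lemma BM_cov {Ω : Type*} [MeasureSpace Ω] {B : Ω → ℝ → ℝ}
    (hB : IsStandardBrownianMotion B) {u w : ℝ} (hu : 0 ≤ u) (hw : 0 ≤ w) :
    Integrable (fun ω => B ω u * B ω w) ℙ ∧ ∫ ω, B ω u * B ω w ∂ℙ = min u w := by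
  obtain ⟨hPr, -, -, hmap⟩ := hB
  have hmin : (0:ℝ) ≤ min u w := le_min hu hw
  have hminu := min_le_left u w
  have hminw := min_le_right u w
  have h1 := hmap 2 ![u, w] ![1, 1] (by
    intro i; fin_cases i <;> simpa)
  have h2 := hmap 2 ![u, w] ![1, -1] (by
    intro i; fin_cases i <;> simpa)
  simp only [Fin.sum_univ_two, Matrix.cons_val_zero, Matrix.cons_val_one, Matrix.head_cons,
    min_self, one_mul, mul_one, neg_mul, mul_neg, neg_neg, min_comm w u] at h1 h2
  have e1 : u + min u w + (min u w + w) = u + w + 2 * min u w := by ring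
  have e2 : u + -min u w + (-min u w + w) = u + w - 2 * min u w := by ring
  rw [e1] at h1
  rw [e2] at h2
  have m1 := moment_of_map h1
  have m2 := moment_of_map h2
  rw [Real.coe_toNNReal _ (by linarith)] at m1
  rw [Real.coe_toNNReal _ (by linarith)] at m2
  have hfun : (fun ω => B ω u * B ω w)
      = fun ω => ((B ω u + B ω w) ^ 2 - (B ω u + -B ω w) ^ 2) / 4 := by
    funext ω; ring
  constructor
  · rw [hfun]
    exact (m1.1.sub m2.1).div_const 4
  · rw [hfun]
    rw [integral_div, integral_sub m1.1 m2.1, m1.2, m2.2]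
    ring

lemma BM_cov4 {Ω : Type*} [MeasureSpace Ω] {B : Ω → ℝ → ℝ}
    (hB : IsStandardBrownianMotion B) {a b c d : ℝ}
    (ha : 0 ≤ a) (hb : 0 ≤ b) (hc : 0 ≤ c) (hd : 0 ≤ d) :
    ∫ ω, (B ω b - B ω a) * (B ω d - B ω c) ∂ℙ
      = min b d - min b c - min a d + min a c := by
  have hbd := BM_cov hB hb hd
  have hbc := BM_cov hB hb hc
  have had := BM_cov hB ha hd
  have hac := BM_cov hB ha hc
  have hfun : (fun ω => (B ω b - B ω a) * (B ω d - B ω c))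
      = fun ω => B ω b * B ω d - B ω b * B ω c - B ω a * B ω d + B ω a * B ω c := by
    funext ω; ring
  have i1 : Integrable (fun ω => B ω b * B ω d - B ω b * B ω c) ℙ := hbd.1.sub hbc.1
  have i2 : Integrable (fun ω => B ω b * B ω d - B ω b * B ω c - B ω a * B ω d) ℙ := i1.sub had.1
  rw [hfun, integral_add i2 hac.1, integral_sub i1 had.1, integral_sub hbd.1 hbc.1,
    hbd.2, hbc.2, had.2, hac.2]

/-- **Local stationarity of the field of standardized Brownian motion increments.**
With `X (x, y) = (B (x + y) − B x)/√y` on `ℍ₊` and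
`r (t, t+s) = Cov (X (x,y), X (x+sₓ, y+s_y))` (the field is centered, so the covariance is
`E[X t · X (t+s)]`), for every `t = (x, y) ∈ ℍ₊` with `x > 0`,
`(1 − r (t, t+s)) / ((|sₓ| + |sₓ + s_y|)/(2y)) → 1` as `s → 0`, `s ≠ 0`. That is, the
field is locally stationary with index `α = 1` and local structure
`C_{(x,y)} (sₓ, s_y) = (|sₓ| + |sₓ + s_y|)/(2y)`. -/
theorem stmt11 {Ω : Type*} [MeasureSpace Ω]
    (B : Ω → ℝ → ℝ) (hB : IsStandardBrownianMotion B)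
    (X : Ω → ℝ × ℝ → ℝ)
    (hX : ∀ ω (p : ℝ × ℝ), X ω p = (B ω (p.1 + p.2) - B ω p.1) / Real.sqrt p.2)
    (r : ℝ × ℝ → ℝ × ℝ → ℝ)
    (hr : ∀ t₁ t₂ : ℝ × ℝ, r t₁ t₂ = ∫ ω, X ω t₁ * X ω t₂ ∂(ℙ : Measure Ω))
    (t : ℝ × ℝ) (hx : 0 < t.1) (hy : 0 < t.2) :
    Tendsto (fun s : ℝ × ℝ =>
        (1 - r t (t.1 + s.1, t.2 + s.2)) / ((|s.1| + |s.1 + s.2|) / (2 * t.2)))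
      (𝓝[≠] (0 : ℝ × ℝ)) (𝓝 1) := by
  obtain ⟨x, y⟩ := t
  dsimp only at hx hy ⊢
  have hsy : √y > 0 := Real.sqrt_pos.mpr hy
  -- helper for mins
  have hm : ∀ p q : ℝ, min p (p + q) = p + (q - |q|) / 2 := by
    intro p q
    rcases le_total 0 q with h | h
    · rw [abs_of_nonneg h, min_eq_left (by linarith)]; ring
    · rw [abs_of_nonpos h, min_eq_right (by linarith)]; ring
  -- explicit formula for r in a neighborhood
  set ε : ℝ := min x (y / 2) with hε
  have hε0 : 0 < ε := lt_min hx (by linarith)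
  have hrs : ∀ s : ℝ × ℝ, |s.1| < ε → |s.2| < ε →
      r (x, y) (x + s.1, y + s.2)
        = (y + s.2 / 2 - (|s.1| + |s.1 + s.2|) / 2) / (√y * √(y + s.2)) := by
    intro s h1 h2
    have h1x : |s.1| < x := lt_of_lt_of_le h1 (min_le_left _ _)
    have h1y : |s.1| < y / 2 := lt_of_lt_of_le h1 (min_le_right _ _)
    have h2y : |s.2| < y / 2 := lt_of_lt_of_le h2 (min_le_right _ _)
    have hb1 := neg_abs_le s.1
    have hb1' := le_abs_self s.1
    have hb2 := neg_abs_le s.2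
    have hb2' := le_abs_self s.2
    rw [hr]
    have hXeq : ∀ ω, X ω (x, y) * X ω (x + s.1, y + s.2)
        = (√y * √(y + s.2))⁻¹ *
          ((B ω (x + y) - B ω x) * (B ω ((x + s.1) + (y + s.2)) - B ω (x + s.1))) := by
      intro ω
      rw [hX ω (x, y), hX ω (x + s.1, y + s.2)]
      ring
    simp only [hXeq]
    rw [integral_const_mul,
      BM_cov4 hB (le_of_lt hx) (by linarith : (0:ℝ) ≤ x + y)
        (by linarith : (0:ℝ) ≤ x + s.1) (by linarith : (0:ℝ) ≤ (x + s.1) + (y + s.2))]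
    have e1 : min (x + y) ((x + s.1) + (y + s.2))
        = (x + y) + ((s.1 + s.2) - |s.1 + s.2|) / 2 := by
      rw [show (x + s.1) + (y + s.2) = (x + y) + (s.1 + s.2) by ring, hm]
    have e2 : min (x + y) (x + s.1) = x + s.1 := min_eq_right (by linarith)
    have e3 : min x ((x + s.1) + (y + s.2)) = x := min_eq_left (by linarith)
    have e4 : min x (x + s.1) = x + (s.1 - |s.1|) / 2 := hm x s.1
    rw [e1, e2, e3, e4, inv_mul_eq_div]
    congr 1
    ring
  -- the two pieces of the limit
  have hT1 : Tendsto (fun s : ℝ × ℝ => y / (√y * √(y + s.2))) (𝓝[≠] (0 : ℝ × ℝ))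
      (𝓝 1) := by
    have hden : Tendsto (fun s : ℝ × ℝ => √y * √(y + s.2)) (𝓝 (0 : ℝ × ℝ))
        (𝓝 (√y * √(y + 0))) := by
      exact (tendsto_const_nhds.mul ((Real.continuous_sqrt.comp
        (continuous_const.add continuous_snd)).tendsto _))
    have : Tendsto (fun s : ℝ × ℝ => y / (√y * √(y + s.2))) (𝓝 (0 : ℝ × ℝ))
        (𝓝 (y / (√y * √(y + 0)))) := by
      refine tendsto_const_nhds.div hden ?_
      rw [add_zero]
      positivity
    rw [show y / (√y * √(y + 0)) = 1 by
      rw [add_zero, Real.mul_self_sqrt hy.le, div_self hy.ne']] at this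
    exact this.mono_left nhdsWithin_le_nhds
  have hT2 : Tendsto (fun s : ℝ × ℝ =>
      2 * y * (√y * √(y + s.2) - y - s.2 / 2) /
        ((√y * √(y + s.2)) * (|s.1| + |s.1 + s.2|))) (𝓝[≠] (0 : ℝ × ℝ)) (𝓝 0) := by
    have hg : Tendsto (fun s : ℝ × ℝ => |s.2| / y) (𝓝[≠] (0 : ℝ × ℝ)) (𝓝 0) := by
      have : Tendsto (fun s : ℝ × ℝ => |s.2| / y) (𝓝 (0 : ℝ × ℝ)) (𝓝 (|(0:ℝ×ℝ).2| / y)) :=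
        ((continuous_snd.abs).div_const y).tendsto _
      simpa using this.mono_left nhdsWithin_le_nhds
    refine squeeze_zero_norm' ?_ hg
    have hball : ∀ᶠ s : ℝ × ℝ in 𝓝 (0 : ℝ × ℝ), dist s 0 < ε :=
      Metric.eventually_nhds_iff.mpr ⟨ε, hε0, fun {z} h => h⟩
    filter_upwards [hball.filter_mono nhdsWithin_le_nhds,
      eventually_mem_nhdsWithin] with s hsd (hs0 : s ≠ (0 : ℝ × ℝ))
    have hd1 : |s.1| < ε := by
      have := le_max_left (dist s.1 0) (dist s.2 0)
      rw [Prod.dist_eq] at hsd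
      simp only [Real.dist_eq, Prod.fst_zero, Prod.snd_zero, sub_zero] at hsd this
      exact lt_of_le_of_lt this hsd
    have hd2 : |s.2| < ε := by
      have := le_max_right (dist s.1 0) (dist s.2 0)
      rw [Prod.dist_eq] at hsd
      simp only [Real.dist_eq, Prod.fst_zero, Prod.snd_zero, sub_zero] at hsd this
      exact lt_of_le_of_lt this hsd
    have h2y : |s.2| < y / 2 := lt_of_lt_of_le hd2 (min_le_right _ _)
    have hb2 := neg_abs_le s.2
    have hb2' := le_abs_self s.2
    set R : ℝ := √y * √(y + s.2) with hR
    set D : ℝ := |s.1| + |s.1 + s.2| with hD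
    have hy2 : (0:ℝ) < y + s.2 := by linarith
    have hR2 : R ^ 2 = y * (y + s.2) := by
      rw [hR, mul_pow, Real.sq_sqrt hy.le, Real.sq_sqrt hy2.le]
    have hRpos : 0 < R := by positivity
    have hRge : y / 2 ≤ R := by nlinarith [hR2, hRpos]
    have hDpos : 0 < D := by
      rcases eq_or_ne s.1 0 with h1 | h1
      · have h2 : s.2 ≠ 0 := fun h2 => hs0 (Prod.ext_iff.mpr ⟨h1, h2⟩)
        have hpos : 0 < |s.1 + s.2| := abs_pos.mpr (by simp [h1, h2])
        have := abs_nonneg s.1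
        rw [hD]; linarith
      · have hpos := abs_pos.mpr h1
        have := abs_nonneg (s.1 + s.2)
        rw [hD]; linarith
    have hkey : (y + s.2 / 2 - R) * (y + s.2 / 2 + R) = s.2 ^ 2 / 4 := by
      nlinarith [hR2]
    have hEnn : 0 ≤ y + s.2 / 2 - R := by nlinarith [hkey, hRge]
    have hEb : (y + s.2 / 2 - R) * (4 * y) ≤ s.2 ^ 2 := by nlinarith [hkey, hRge, hEnn]
    have hsD : |s.2| ≤ D := by
      have h3 : |s.1 + s.2 - s.1| ≤ |s.1 + s.2| + |s.1| := abs_sub _ _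
      rw [show s.1 + s.2 - s.1 = s.2 by ring] at h3
      rw [hD]; linarith
    have hnum : |2 * y * (R - y - s.2 / 2)| = 2 * y * (y + s.2 / 2 - R) := by
      rw [abs_mul, abs_of_pos (by positivity : (0:ℝ) < 2 * y),
        abs_of_nonpos (by linarith : R - y - s.2 / 2 ≤ 0)]
      ring
    rw [Real.norm_eq_abs, abs_div, hnum, abs_of_pos (by positivity : (0:ℝ) < R * D),
      div_le_div_iff₀ (by positivity) hy]
    calc 2 * y * (y + s.2 / 2 - R) * y = (y / 2) * ((y + s.2 / 2 - R) * (4 * y)) := by ring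
      _ ≤ (y / 2) * s.2 ^ 2 := by
          exact mul_le_mul_of_nonneg_left hEb (by positivity)
      _ = (y / 2) * (|s.2| * |s.2|) := by rw [abs_mul_abs_self]; ring
      _ ≤ (y / 2) * (|s.2| * D) := by
          exact mul_le_mul_of_nonneg_left
            (mul_le_mul_of_nonneg_left hsD (abs_nonneg _)) (by positivity)
      _ = |s.2| * ((y / 2) * D) := by ring
      _ ≤ |s.2| * (R * D) := by
          exact mul_le_mul_of_nonneg_left
            (mul_le_mul_of_nonneg_right hRge hDpos.le) (abs_nonneg _)
  -- assemble
  have hsum := hT1.add hT2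
  rw [add_zero] at hsum
  refine hsum.congr' ?_
  have hball : ∀ᶠ s : ℝ × ℝ in 𝓝 (0 : ℝ × ℝ), dist s 0 < ε :=
    Metric.eventually_nhds_iff.mpr ⟨ε, hε0, fun {z} h => h⟩
  filter_upwards [hball.filter_mono nhdsWithin_le_nhds,
    eventually_mem_nhdsWithin] with s hsd (hs0 : s ≠ (0 : ℝ × ℝ))
  have hd1 : |s.1| < ε := by
    have := le_max_left (dist s.1 0) (dist s.2 0)
    rw [Prod.dist_eq] at hsd
    simp only [Real.dist_eq, Prod.fst_zero, Prod.snd_zero, sub_zero] at hsd this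
    exact lt_of_le_of_lt this hsd
  have hd2 : |s.2| < ε := by
    have := le_max_right (dist s.1 0) (dist s.2 0)
    rw [Prod.dist_eq] at hsd
    simp only [Real.dist_eq, Prod.fst_zero, Prod.snd_zero, sub_zero] at hsd this
    exact lt_of_le_of_lt this hsd
  have h2y : |s.2| < y / 2 := lt_of_lt_of_le hd2 (min_le_right _ _)
  have hb2 := neg_abs_le s.2
  have hb2' := le_abs_self s.2
  have hy2 : (0:ℝ) < y + s.2 := by linarith
  have hR2 : (√y * √(y + s.2)) ^ 2 = y * (y + s.2) := by
    rw [mul_pow, Real.sq_sqrt hy.le, Real.sq_sqrt hy2.le]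
  have hRpos : 0 < √y * √(y + s.2) := by positivity
  have hDpos : 0 < |s.1| + |s.1 + s.2| := by
    rcases eq_or_ne s.1 0 with h1 | h1
    · have h2 : s.2 ≠ 0 := fun h2 => hs0 (Prod.ext_iff.mpr ⟨h1, h2⟩)
      have hpos : 0 < |s.1 + s.2| := abs_pos.mpr (by simp [h1, h2])
      have := abs_nonneg s.1
      linarith
    · have hpos := abs_pos.mpr h1
      have := abs_nonneg (s.1 + s.2)
      linarith
  rw [hrs s hd1 hd2]
  field_simp
  ring
end

section
/- Let W(t) = B(t) − tB(1) for t ∈ [0,1] be the Brownian bridge and define the standardized Brownian bridge X(t) = W(t)/√(t(1−t)) for t ∈ (0,1). Let r(t, t+s) = Cov(X(t), X(t+s)) for t, t+s ∈ (0,1). Then for every t ∈ (0,1), lim_{s→0, s≠0} (1 − r(t, t+s))/(|s|/(2t(1−t))) = 1. In other words, the standardized Brownian bridge is locally stationary with index α = 1 and local structure C_t(s) = |s|/(2t(1−t)). -/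
open MeasureTheory ProbabilityTheory Filter Real Topology

/-!
The Brownian bridge has covariance `min s u - s u`, so `r (t, t+s)` is
`(min t (t+s) - t (t+s)) / g s` with `g s = √(t(1-t)) √((t+s)(1-t-s))`. The numerator equals
`g 0 + g' 0 · s - |s|/2`: the smooth part of the numerator cancels `g` to first order, and only
the kink `|s|/2` of `min` survives, giving `1 - r (t, t+s) ~ |s| / (2 t (1-t))`.
-/

open scoped NNReal

section

variable {Ω : Type*} [MeasurableSpace Ω] {P : Measure Ω}

lemma integrable_sq_and_integral_sq_of_map_eq_gaussianReal {Y : Ω → ℝ} {v : ℝ≥0}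
    (h : P.map Y = gaussianReal 0 v) :
    Integrable (fun ω => Y ω ^ 2) P ∧ ∫ ω, Y ω ^ 2 ∂P = v := by
  have hY : AEMeasurable Y P := aemeasurable_of_map_neZero (by rw [h]; infer_instance)
  have hsq : AEStronglyMeasurable (fun x : ℝ => x ^ 2) (P.map Y) := by fun_prop
  refine ⟨?_, ?_⟩
  · have := (memLp_map_measure_iff (p := 2) aestronglyMeasurable_id hY).mp
      (h ▸ memLp_id_gaussianReal 2)
    exact this.integrable_sq
  · rw [← integral_map hY hsq, h, ← variance_fun_id_gaussianReal (μ := 0),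
      variance_eq_integral aemeasurable_id']
    simp

lemma integrable_mul_and_integral_mul_of_integrable_sq {Y Z : Ω → ℝ}
    (hY : Integrable (fun ω => Y ω ^ 2) P) (hZ : Integrable (fun ω => Z ω ^ 2) P)
    (hYZ : Integrable (fun ω => (Y ω + Z ω) ^ 2) P) :
    Integrable (fun ω => Y ω * Z ω) P ∧
      ∫ ω, Y ω * Z ω ∂P =
        ((∫ ω, (Y ω + Z ω) ^ 2 ∂P) - (∫ ω, Y ω ^ 2 ∂P) - ∫ ω, Z ω ^ 2 ∂P) / 2 := by
  have hpol : (fun ω => Y ω * Z ω) = fun ω => ((Y ω + Z ω) ^ 2 - Y ω ^ 2 - Z ω ^ 2) / 2 := by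
    funext ω; ring
  rw [hpol]
  have hYZ_Y : Integrable (fun ω => (Y ω + Z ω) ^ 2 - Y ω ^ 2) P := hYZ.sub hY
  exact ⟨(hYZ_Y.sub hZ).div_const 2, by
    rw [integral_div, integral_sub hYZ_Y hZ, integral_sub hYZ hY]⟩

end

namespace IsStandardBrownianMotion

variable {Ω : Type*} [MeasureSpace Ω] {B : Ω → ℝ → ℝ}

lemma map_eval (hB : IsStandardBrownianMotion B) {s : ℝ} (hs : 0 ≤ s) :
    (ℙ : Measure Ω).map (fun ω => B ω s) = gaussianReal 0 s.toNNReal := by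
  simpa using hB.2.2.2 1 ![s] ![1] (by simp [hs])

lemma map_eval_add_eval (hB : IsStandardBrownianMotion B) {s u : ℝ} (hs : 0 ≤ s) (hu : 0 ≤ u) :
    (ℙ : Measure Ω).map (fun ω => B ω s + B ω u) =
      gaussianReal 0 (s + u + 2 * min s u).toNNReal := by
  have h := hB.2.2.2 2 ![s, u] ![1, 1] (by simp [Fin.forall_fin_two, hs, hu])
  rw [show s + u + 2 * min s u = min s s + min s u + (min u s + min u u) by
    rw [min_self, min_self, min_comm u s]; ring]
  simpa [Fin.sum_univ_two] using h

lemma integrable_mul_and_integral_mul (hB : IsStandardBrownianMotion B) {s u : ℝ}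
    (hs : 0 ≤ s) (hu : 0 ≤ u) :
    Integrable (fun ω => B ω s * B ω u) ∧ ∫ ω, B ω s * B ω u = min s u := by
  obtain ⟨hs2, hs2_eq⟩ := integrable_sq_and_integral_sq_of_map_eq_gaussianReal (hB.map_eval hs)
  obtain ⟨hu2, hu2_eq⟩ := integrable_sq_and_integral_sq_of_map_eq_gaussianReal (hB.map_eval hu)
  obtain ⟨hsu2, hsu2_eq⟩ :=
    integrable_sq_and_integral_sq_of_map_eq_gaussianReal (hB.map_eval_add_eval hs hu)
  obtain ⟨hint, hint_eq⟩ := integrable_mul_and_integral_mul_of_integrable_sq hs2 hu2 hsu2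
  refine ⟨hint, ?_⟩
  rw [hint_eq, hs2_eq, hu2_eq, hsu2_eq, Real.coe_toNNReal _ hs, Real.coe_toNNReal _ hu,
    Real.coe_toNNReal _ (by positivity)]
  ring

lemma integral_bridge_mul_bridge (hB : IsStandardBrownianMotion B) {s u : ℝ}
    (hs : s ∈ Set.Icc (0 : ℝ) 1) (hu : u ∈ Set.Icc (0 : ℝ) 1) :
    ∫ ω, (B ω s - s * B ω 1) * (B ω u - u * B ω 1) = min s u - s * u := by
  obtain ⟨i₁, e₁⟩ := hB.integrable_mul_and_integral_mul hs.1 hu.1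
  obtain ⟨i₂, e₂⟩ := hB.integrable_mul_and_integral_mul hs.1 zero_le_one
  obtain ⟨i₃, e₃⟩ := hB.integrable_mul_and_integral_mul zero_le_one hu.1
  obtain ⟨i₄, e₄⟩ := hB.integrable_mul_and_integral_mul zero_le_one zero_le_one
  have expand : (fun ω => (B ω s - s * B ω 1) * (B ω u - u * B ω 1)) = fun ω =>
      B ω s * B ω u - u * (B ω s * B ω 1) - s * (B ω 1 * B ω u) + s * u * (B ω 1 * B ω 1) := by
    funext ω; ring
  have i₁₂ : Integrable (fun ω => B ω s * B ω u - u * (B ω s * B ω 1)) := i₁.sub (i₂.const_mul u)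
  have i₁₂₃ : Integrable (fun ω => B ω s * B ω u - u * (B ω s * B ω 1) - s * (B ω 1 * B ω u)) :=
    i₁₂.sub (i₃.const_mul s)
  rw [expand, integral_add i₁₂₃ (i₄.const_mul _),
    integral_sub i₁₂ (i₃.const_mul s), integral_sub i₁ (i₂.const_mul u), integral_const_mul,
    integral_const_mul, integral_const_mul, e₁, e₂, e₃, e₄, min_eq_left hs.2, min_eq_right hu.2,
    min_self]
  ring

end IsStandardBrownianMotion

lemma tendsto_one_sub_div_abs_of_hasDerivAt {g : ℝ → ℝ} {c : ℝ} (hg : HasDerivAt g c 0)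
    (h0 : g 0 ≠ 0) :
    Tendsto (fun s => (1 - (g 0 + c * s - |s| / 2) / g s) / (|s| / (2 * g 0)))
      (𝓝[≠] 0) (𝓝 1) := by
  have hcont : Tendsto g (𝓝[≠] 0) (𝓝 (g 0)) :=
    hg.continuousAt.tendsto.mono_left nhdsWithin_le_nhds
  have hrem : Tendsto (fun s => (g s - g 0 - c * s) / |s|) (𝓝[≠] 0) (𝓝 0) := by
    have := (hasDerivAt_iff_isLittleO.mp hg).norm_right.tendsto_div_nhds_zero
    simpa [mul_comm c] using this.mono_left nhdsWithin_le_nhds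
  have hlim : Tendsto (fun s => 2 * g 0 / g s * ((g s - g 0 - c * s) / |s| + 1 / 2))
      (𝓝[≠] 0) (𝓝 1) := by
    have := (tendsto_const_nhds (x := 2 * g 0)).div hcont h0 |>.mul (hrem.add_const (1 / 2))
    rwa [zero_add, mul_div_assoc, div_self h0, mul_one, mul_one_div_cancel two_ne_zero] at this
  refine hlim.congr' ?_
  filter_upwards [self_mem_nhdsWithin, hcont.eventually_ne h0] with s hs hgs
  have : |s| ≠ 0 := abs_ne_zero.mpr hs
  field_simp
  ring

lemma min_self_add_sub_mul_eq (t s : ℝ) :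
    min t (t + s) - t * (t + s) = t * (1 - t) + (1 - 2 * t) / 2 * s - |s| / 2 := by
  rcases le_total 0 s with hs | hs
  · rw [min_eq_left (by linarith), abs_of_nonneg hs]; ring
  · rw [min_eq_right (by linarith), abs_of_nonpos hs]; ring

lemma hasDerivAt_sqrt_mul_sqrt_mul_one_sub {t : ℝ} (ht : t ∈ Set.Ioo (0 : ℝ) 1) :
    HasDerivAt (fun s => √(t * (1 - t)) * √((t + s) * (1 - (t + s)))) ((1 - 2 * t) / 2) 0 := by
  have hpos : 0 < t * (1 - t) := mul_pos ht.1 (sub_pos.mpr ht.2)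
  have hshift : HasDerivAt (fun s : ℝ => t + s) 1 0 := (hasDerivAt_id' 0).const_add t
  have hinner : HasDerivAt (fun s => (t + s) * (1 - (t + s))) (1 - 2 * t) 0 :=
    (hshift.fun_mul (hshift.const_sub 1)).congr_deriv (by ring)
  refine ((hinner.sqrt (by simpa using hpos.ne')).const_mul √(t * (1 - t))).congr_deriv ?_
  rw [add_zero]
  field_simp

/-- **Local stationarity of the standardized Brownian bridge.** Let
`W t = B t − t B 1` be the Brownian bridge, `X t = W t / √(t (1−t))` for `t ∈ (0,1)`
the standardized Brownian bridge, and `r (t, t+s) = Cov (X t, X (t+s))` (the process is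
centered, so the covariance is `E[X t · X (t+s)]`). Then for every `t ∈ (0,1)`,
`(1 − r (t, t+s)) / (|s|/(2t(1−t))) → 1` as `s → 0`, `s ≠ 0`. That is, the standardized
Brownian bridge is locally stationary with index `α = 1` and local structure
`C_t s = |s|/(2t(1−t))`. -/
theorem stmt12 {Ω : Type*} [MeasureSpace Ω]
    (B : Ω → ℝ → ℝ) (hB : IsStandardBrownianMotion B)
    (W : Ω → ℝ → ℝ) (hW : ∀ ω (t : ℝ), W ω t = B ω t - t * B ω 1)
    (X : Ω → ℝ → ℝ) (hX : ∀ ω (t : ℝ), X ω t = W ω t / Real.sqrt (t * (1 - t)))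
    (r : ℝ → ℝ → ℝ)
    (hr : ∀ t₁ t₂ : ℝ, r t₁ t₂ = ∫ ω, X ω t₁ * X ω t₂ ∂(ℙ : Measure Ω))
    (t : ℝ) (ht : t ∈ Set.Ioo (0 : ℝ) 1) :
    Tendsto (fun s : ℝ => (1 - r t (t + s)) / (|s| / (2 * t * (1 - t))))
      (𝓝[≠] (0 : ℝ)) (𝓝 1) := by
  have hr_eq : ∀ u ∈ Set.Icc (0 : ℝ) 1,
      r t u = (min t u - t * u) / (√(t * (1 - t)) * √(u * (1 - u))) := by
    intro u hu
    simp_rw [hr, hX, hW, div_mul_div_comm]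
    rw [integral_div, hB.integral_bridge_mul_bridge (Set.Ioo_subset_Icc_self ht) hu]
  have hvar : 0 < t * (1 - t) := mul_pos ht.1 (sub_pos.mpr ht.2)
  have hg0 : √(t * (1 - t)) * √((t + 0) * (1 - (t + 0))) = t * (1 - t) := by
    rw [add_zero, Real.mul_self_sqrt hvar.le]
  have hlim := tendsto_one_sub_div_abs_of_hasDerivAt (hasDerivAt_sqrt_mul_sqrt_mul_one_sub ht)
    (by rw [hg0]; exact hvar.ne')
  rw [hg0] at hlim
  have hnear : ∀ᶠ s in 𝓝[≠] (0 : ℝ), t + s ∈ Set.Icc (0 : ℝ) 1 := by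
    refine eventually_nhdsWithin_of_eventually_nhds ?_
    have : Tendsto (fun s : ℝ => t + s) (𝓝 0) (𝓝 t) := by
      simpa using tendsto_const_nhds.add (tendsto_id (x := 𝓝 (0 : ℝ)))
    exact this.eventually (Icc_mem_nhds ht.1 ht.2)
  refine hlim.congr' ?_
  filter_upwards [hnear] with s hs
  rw [hr_eq _ hs, min_self_add_sub_mul_eq, mul_assoc 2]
end
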